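/- arXiv:2001.10640 — 2 statements merged into one kernel-verified Lean document; each statement's English description precedes it below -/
import Mathlib

section
/- The incentive ratio bound 3/2 for the Probabilistic Serial mechanism is tight: for every ε > 0 there exist n = m, a profile of reported strict orders for agents 2,…,n, cardinal utilities a_{1j} ∈ [0,1] for agent 1, a truthful report for agent 1, and a misreport for agent 1 such that u'_1 / u_1 > 3/2 − ε. -/
open MeasureTheory

/-- An execution of the Probabilistic Serial eating process with `n` agents and `m` items
(each of supply 1).  Agent `i` reports the strict preference order encoded by the injective
rank function `rk i` (`rk i j < rk i j'` means agent `i` ranks item `j` above item `j'`).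
`active i t` tells whether agent `i` participates (eats at rate 1) at time `t`; the normal
scenario is `active = fun _ _ => True`, pausing/removing agents is modelled by making them
inactive.  `eats i t = some j` means agent `i` is eating item `j` at time `t`, and `rem j t`
is the remaining supply of item `j` at time `t`: it equals `1` minus the total time agents
have spent eating `j` during `(0, t]`.  An active agent always eats its most preferred item
among those with positive remaining supply. -/
structure PSExec (n m : ℕ) (rk : Fin n → Fin m → ℕ) (active : Fin n → ℝ → Prop) where
  eats : Fin n → ℝ → Option (Fin m)
  rem : Fin m → ℝ → ℝ
  meas : ∀ i j, MeasurableSet {t : ℝ | eats i t = some j}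
  rem_def : ∀ j, ∀ t : ℝ, 0 ≤ t →
    rem j t = 1 - ∑ i : Fin n,
      (volume {s : ℝ | 0 < s ∧ s ≤ t ∧ eats i s = some j}).toReal
  eats_iff : ∀ i, ∀ t : ℝ, 0 ≤ t → active i t → ∀ j,
    (eats i t = some j ↔ 0 < rem j t ∧ ∀ j', 0 < rem j' t → rk i j ≤ rk i j')
  eats_none : ∀ i, ∀ t : ℝ, ¬ active i t → eats i t = none

namespace PSExec

variable {n m : ℕ} {rk : Fin n → Fin m → ℕ} {active : Fin n → ℝ → Prop}

/-- The total amount of item `j` eaten by agent `i` (the allocation `x i j`). -/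
noncomputable def alloc (E : PSExec n m rk active) (i : Fin n) (j : Fin m) : ℝ :=
  (volume {s : ℝ | 0 < s ∧ E.eats i s = some j}).toReal

/-- The expected utility of agent `i` with cardinal utilities `a`. -/
noncomputable def utility (E : PSExec n m rk active) (a : Fin m → ℝ) (i : Fin n) : ℝ :=
  ∑ j, a j * E.alloc i j

/-- Item `j` is exhausted exactly at time `τ`. -/
def exhaustedAt (E : PSExec n m rk active) (j : Fin m) (τ : ℝ) : Prop :=
  0 < τ ∧ E.rem j τ = 0 ∧ ∀ s : ℝ, 0 ≤ s → s < τ → 0 < E.rem j s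

/-- Agent `i` is eating item `j` at the moment `τ`, in the left-limit sense (this is the
sense used for "eating an item at the moment of its exhaustion"). -/
def eatsAt (E : PSExec n m rk active) (i : Fin n) (j : Fin m) (τ : ℝ) : Prop :=
  ∃ δ > 0, ∀ s : ℝ, τ - δ < s → s < τ → E.eats i s = some j

/-- `T` is the exact moment at which the last item of `Obar` is exhausted. -/
def exhaustTime (E : PSExec n m rk active) (Obar : Finset (Fin m)) (T : ℝ) : Prop :=
  (∀ j ∈ Obar, E.rem j T = 0) ∧ ∀ s : ℝ, 0 ≤ s → s < T → ∃ j ∈ Obar, 0 < E.rem j s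

end PSExec

/-- Dichotomous cardinal utilities with interest set `Obar`. -/
def dicho {m : ℕ} (Obar : Finset (Fin m)) : Fin m → ℝ :=
  fun j => if j ∈ Obar then 1 else 0

/-!
A PS execution is determined by the exhaustion times `τ j` of the items: at time `t` every agent
eats its favourite item among those with `t < τ j`. Conversely, any `τ` for which every item
receives total mass exactly `1` under this rule is realised by an execution; so building the
two executions below reduces to one linear identity per item.

The example has `n = m = 2p + 4`. Agent `0` values item `A` at `1` and item `B` at `p / (p + 1)`
and shares `A` with a rival, while a group of `2p + 2` agents first eats `p` pool items and then
`B`, so that under truthful reporting `A` and `B` both run out at time `1/2` and agent `0` gets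
utility `1/2`. Reporting `B` first, agent `0` obtains `(p + 1) / (2p + 3)` of `B` before the group
finishes it and then half of what is left of `A`, for a utility ratio of
`1 + (p - 1) / (2p + 3) → 3/2`.
-/

open Finset

namespace PSExec

section ExhaustionTimes

variable {m : ℕ} (r : Fin m → ℕ) (τ : Fin m → ℝ)

/-- An agent ranking the items by `r` eats `j` during `[startTime r τ j, τ j)`. -/
noncomputable def startTime (j : Fin m) : ℝ :=
  (insert 0 ((univ.filter fun j' => r j' < r j).image τ)).max' (insert_nonempty _ _)

variable {r τ} {j j' : Fin m}

theorem startTime_le_iff {s : ℝ} :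
    startTime r τ j ≤ s ↔ 0 ≤ s ∧ ∀ j', r j' < r j → τ j' ≤ s := by
  simp [startTime, max'_le_iff]

theorem startTime_nonneg : 0 ≤ startTime r τ j :=
  le_max' _ _ (mem_insert_self _ _)

theorem le_startTime (h : r j' < r j) : τ j' ≤ startTime r τ j :=
  le_max' _ _ (mem_insert_of_mem (mem_image_of_mem _ (by simpa using h)))

theorem startTime_eq_zero (h : ∀ j', r j ≤ r j') : startTime r τ j = 0 :=
  le_antisymm (startTime_le_iff.2 ⟨le_rfl, fun j' h' => absurd (h j') h'.not_ge⟩)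
    startTime_nonneg

theorem startTime_eq (h : r j' < r j) (hle : ∀ j'', r j'' < r j → τ j'' ≤ τ j')
    (h0 : 0 ≤ τ j') : startTime r τ j = τ j' :=
  le_antisymm (startTime_le_iff.2 ⟨h0, hle⟩) (le_startTime h)

theorem max_sub_startTime_eq_zero (h : r j' < r j) (hτ : τ j ≤ τ j') :
    max (τ j - startTime r τ j) 0 = 0 :=
  max_eq_right (by linarith [le_startTime (τ := τ) h])

variable (r τ) in
open Classical in
noncomputable def favorite (t : ℝ) : Option (Fin m) :=
  if h : ∃ j, t < τ j ∧ ∀ j', t < τ j' → r j ≤ r j' then some h.choose else none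

theorem favorite_eq_some_iff (hr : Function.Injective r) {t : ℝ} :
    favorite r τ t = some j ↔ t < τ j ∧ ∀ j', t < τ j' → r j ≤ r j' := by
  unfold favorite
  split_ifs with h
  · refine ⟨fun hj => Option.some_injective _ hj ▸ h.choose_spec, fun hj => ?_⟩
    exact congrArg some (hr (le_antisymm (h.choose_spec.2 j hj.1) (hj.2 _ h.choose_spec.1)))
  · exact ⟨fun hj => absurd hj (by simp), fun hj => absurd ⟨j, hj⟩ h⟩

theorem favorite_eq_some_iff' (hr : Function.Injective r) {t : ℝ} :
    favorite r τ t = some j ↔ t < τ j ∧ ∀ j', r j' < r j → τ j' ≤ t := by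
  rw [favorite_eq_some_iff hr]
  exact and_congr_right fun _ => ⟨fun h j' hj' => not_lt.1 fun ht => (h j' ht).not_gt hj',
    fun h j' ht => not_lt.1 fun hj' => (h j' hj').not_gt ht⟩

theorem measurableSet_favorite_eq (hr : Function.Injective r) (j : Fin m) :
    MeasurableSet {t | favorite r τ t = some j} := by
  have : {t | favorite r τ t = some j} =
      Set.Iio (τ j) ∩ ⋂ j' ∈ {j' | r j' < r j}, Set.Ici (τ j') := by
    ext t; simp [favorite_eq_some_iff' hr]
  rw [this]
  exact measurableSet_Iio.inter (.biInter (Set.to_countable _) fun _ _ => measurableSet_Ici)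

theorem volume_window_toReal {σ τ t : ℝ} (hσ : 0 ≤ σ) :
    (volume {s : ℝ | 0 < s ∧ s ≤ t ∧ σ ≤ s ∧ s < τ}).toReal =
      max (min t τ - σ) 0 := by
  set S := {s : ℝ | 0 < s ∧ s ≤ t ∧ σ ≤ s ∧ s < τ}
  have hIoo : Set.Ioo σ (min t τ) ⊆ S := fun s ⟨hσs, hst⟩ =>
    ⟨hσ.trans_lt hσs, (lt_min_iff.1 hst).1.le, hσs.le, (lt_min_iff.1 hst).2⟩
  have hIcc : S ⊆ Set.Icc σ (min t τ) := fun s ⟨_, hst, hσs, hsτ⟩ =>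
    ⟨hσs, le_min hst hsτ.le⟩
  have h : volume S = ENNReal.ofReal (min t τ - σ) :=
    le_antisymm ((measure_mono hIcc).trans_eq (Real.volume_Icc ..))
      ((Real.volume_Ioo ..).symm.trans_le (measure_mono hIoo))
  rw [h, ENNReal.toReal_ofReal']

theorem volume_favorite_toReal (hr : Function.Injective r) (t : ℝ) :
    (volume {s : ℝ | 0 < s ∧ s ≤ t ∧ favorite r τ s = some j}).toReal =
      max (min t (τ j) - startTime r τ j) 0 := by
  rw [← volume_window_toReal startTime_nonneg]
  congr 2
  ext s
  simp only [Set.mem_ofPred_eq, favorite_eq_some_iff' hr]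
  constructor
  · rintro ⟨hs, hst, hsj, hle⟩
    exact ⟨hs, hst, startTime_le_iff.2 ⟨hs.le, hle⟩, hsj⟩
  · rintro ⟨hs, hst, hle, hsj⟩
    exact ⟨hs, hst, hsj, (startTime_le_iff.1 hle).2⟩

theorem sum_max_min_sub_lt_one_iff {ι : Type*} [Fintype ι] {σ : ι → ℝ} {τ t : ℝ}
    (h : ∑ i, max (τ - σ i) 0 = 1) : ∑ i, max (min t τ - σ i) 0 < 1 ↔ t < τ := by
  refine ⟨fun hlt => not_le.1 fun hτt => ?_, fun htτ => ?_⟩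
  · rw [min_eq_right hτt, h] at hlt
    exact lt_irrefl _ hlt
  · obtain ⟨i, -, hi⟩ : ∃ i ∈ univ, 0 < τ - σ i := by
      by_contra! hall
      simp [max_eq_right (hall _ (mem_univ _))] at h
    rw [min_eq_left htτ.le, ← h]
    refine sum_lt_sum (fun i _ => max_le_max (by linarith) le_rfl) ⟨i, mem_univ _, ?_⟩
    rw [max_eq_left hi.le]
    exact max_lt (by linarith) hi

theorem startTime_val_eq {τ : Fin m → ℝ} {f : ℕ → ℝ} (hf : Monotone f) (hf0 : f 0 = 0)
    {k : ℕ} (hτ : ∀ j : Fin m, j.val < k → τ j = f (j + 1)) (j : Fin m) (hj : j.val ≤ k) :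
    startTime Fin.val τ j = f j := by
  obtain ⟨_ | i, hi⟩ := j
  · exact (startTime_eq_zero fun j' => Nat.zero_le _).trans hf0.symm
  · dsimp only at hj ⊢
    have hτi : τ ⟨i, by omega⟩ = f (i + 1) := hτ ⟨i, by omega⟩ (by dsimp only; omega)
    refine (startTime_eq (j' := ⟨i, by omega⟩) (by simp) (fun j'' h'' => ?_) ?_).trans hτi
    · dsimp only at h''
      rw [hτ j'' (by omega), hτi]
      exact hf (by omega)
    · rw [hτi, ← hf0]
      exact hf (Nat.zero_le _)

section TopThree

variable (x y z : Fin m)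

def topThreeRank (j : Fin m) : ℕ :=
  if j = x then 0 else if j = y then 1 else if j = z then 2 else j + 3

variable {x y z}

theorem topThreeRank_injective : Function.Injective (topThreeRank x y z) := by
  intro j j' h
  unfold topThreeRank at h
  split_ifs at h <;> omega

theorem startTime_topThreeRank_first {τ : Fin m → ℝ} :
    startTime (topThreeRank x y z) τ x = 0 :=
  startTime_eq_zero fun _ => by simp [topThreeRank]

theorem startTime_topThreeRank_second (hxy : x ≠ y) {τ : Fin m → ℝ} (h0 : 0 ≤ τ x) :
    startTime (topThreeRank x y z) τ y = τ x := by
  refine startTime_eq (by simp [topThreeRank, hxy.symm]) (fun j h => ?_) h0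
  simp only [topThreeRank, hxy.symm, ↓reduceIte] at h
  split_ifs at h with hx
  · exact hx ▸ le_rfl
  all_goals omega

theorem startTime_topThreeRank_third (hxz : x ≠ z) (hyz : y ≠ z) {τ : Fin m → ℝ}
    (h0 : 0 ≤ τ x) : startTime (topThreeRank x y z) τ z = max (τ x) (τ y) := by
  have hle : ∀ j, topThreeRank x y z j < topThreeRank x y z z → τ j ≤ max (τ x) (τ y) := by
    intro j h
    simp only [topThreeRank, hxz.symm, hyz.symm, ↓reduceIte] at h
    split_ifs at h with hx hy
    · exact hx ▸ le_max_left _ _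
    · exact hy ▸ le_max_right _ _
    all_goals omega
  refine le_antisymm (startTime_le_iff.2 ⟨h0.trans (le_max_left _ _), hle⟩) (max_le ?_ ?_) <;>
    exact le_startTime (by unfold topThreeRank; split_ifs <;> simp_all)

theorem max_sub_startTime_topThreeRank (hxy : x ≠ y) (hxz : x ≠ z) (hyz : y ≠ z)
    {τ : Fin m → ℝ} (hτ0 : ∀ j, 0 ≤ τ j) (hτz : ∀ j, τ j ≤ τ z) (j : Fin m) :
    max (τ j - startTime (topThreeRank x y z) τ j) 0 =
      if j = x then τ x else if j = y then max (τ y - τ x) 0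
      else if j = z then τ z - max (τ x) (τ y) else 0 := by
  split_ifs with hx hy hz
  · rw [hx, startTime_topThreeRank_first, sub_zero, max_eq_left (hτ0 _)]
  · rw [hy, startTime_topThreeRank_second hxy (hτ0 x)]
  · rw [hz, startTime_topThreeRank_third hxz hyz (hτ0 x),
      max_eq_left (sub_nonneg.2 (max_le (hτz x) (hτz y)))]
  · refine max_sub_startTime_eq_zero (j' := z) ?_ (hτz j)
    simp [topThreeRank, hx, hy, hz, hxz.symm, hyz.symm]

end TopThree
end ExhaustionTimes

variable {n m : ℕ}

noncomputable def ofExhaustionTimes (rk : Fin n → Fin m → ℕ)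
    (hrk : ∀ i, Function.Injective (rk i)) (τ : Fin m → ℝ)
    (hτ : ∀ j, ∑ i, max (τ j - startTime (rk i) τ j) 0 = 1) :
    PSExec n m rk (fun _ _ => True) where
  eats i := favorite (rk i) τ
  rem j t :=
    1 - ∑ i, (volume {s : ℝ | 0 < s ∧ s ≤ t ∧ favorite (rk i) τ s = some j}).toReal
  meas i j := measurableSet_favorite_eq (hrk i) j
  rem_def _ _ _ := rfl
  eats_iff i t _ _ j := by
    have alive : ∀ j, 0 < 1 - ∑ i, (volume {s : ℝ | 0 < s ∧ s ≤ t ∧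
        favorite (rk i) τ s = some j}).toReal ↔ t < τ j := fun j => by
      simp only [volume_favorite_toReal (hrk _), sub_pos]
      exact sum_max_min_sub_lt_one_iff (hτ j)
    simp only [alive, favorite_eq_some_iff (hrk i)]
  eats_none _ _ h := absurd trivial h

theorem alloc_ofExhaustionTimes {rk : Fin n → Fin m → ℕ} {τ : Fin m → ℝ}
    (hrk : ∀ i, Function.Injective (rk i))
    (hτ : ∀ j, ∑ i, max (τ j - startTime (rk i) τ j) 0 = 1) (i : Fin n) (j : Fin m) :
    (ofExhaustionTimes rk hrk τ hτ).alloc i j = max (τ j - startTime (rk i) τ j) 0 := by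
  have h := volume_favorite_toReal (τ := τ) (j := j) (hrk i) (τ j)
  rw [min_self] at h
  rw [← h, alloc]
  congr 2
  ext s
  exact ⟨fun ⟨hs, hj⟩ => ⟨hs, ((favorite_eq_some_iff (hrk i)).1 hj).1.le, hj⟩,
    fun ⟨hs, _, hj⟩ => ⟨hs, hj⟩⟩

end PSExec

namespace ThreeHalvesExample

open PSExec

/- Items `0, …, p - 1` form the pool, `B = p`, then come `p + 1` filler items and the last
filler `L`, eaten by the group in index order; `A` is last. Agent `0` is the manipulator,
agent `1` the rival ranking `A, B, L` on top, and the others form the group. `groupTime p b k` is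
the time at which the group finishes its first `k` items when `B` runs out at `b`. -/
def itemB (p : ℕ) : Fin (2 * p + 4) := ⟨p, by omega⟩
def itemL (p : ℕ) : Fin (2 * p + 4) := ⟨2 * p + 2, by omega⟩
def itemA (p : ℕ) : Fin (2 * p + 4) := ⟨2 * p + 3, by omega⟩

noncomputable def groupTime (p : ℕ) (b : ℝ) (k : ℕ) : ℝ :=
  if k ≤ p then k / (2 * p + 2) else if k ≤ 2 * p + 2 then b + (k - p - 1) / (2 * p + 2) else 1

noncomputable def exhaustion (p : ℕ) (b tA : ℝ) (j : Fin (2 * p + 4)) : ℝ :=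
  if j.val ≤ 2 * p + 2 then groupTime p b (j + 1) else tA

abbrev rankAB (p : ℕ) : Fin (2 * p + 4) → ℕ := topThreeRank (itemA p) (itemB p) (itemL p)
abbrev rankBA (p : ℕ) : Fin (2 * p + 4) → ℕ := topThreeRank (itemB p) (itemA p) (itemL p)

def profile (p : ℕ) (r₀ : Fin (2 * p + 4) → ℕ) :
    Fin (2 * p + 4) → Fin (2 * p + 4) → ℕ :=
  Fin.cons r₀ (Fin.cons (rankAB p) fun _ => Fin.val)

noncomputable def valuation (p : ℕ) (j : Fin (2 * p + 4)) : ℝ :=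
  if j = itemA p then 1 else if j = itemB p then p / (p + 1) else 0

variable {p : ℕ} {b tA : ℝ}

@[simp] theorem itemB_val : (itemB p).val = p := rfl
@[simp] theorem itemL_val : (itemL p).val = 2 * p + 2 := rfl
@[simp] theorem itemA_val : (itemA p).val = 2 * p + 3 := rfl

theorem itemA_ne_itemB : itemA p ≠ itemB p :=
  Fin.ne_of_val_ne (by simp only [itemA_val, itemB_val]; omega)
theorem itemA_ne_itemL : itemA p ≠ itemL p := Fin.ne_of_val_ne (by simp)
theorem itemB_ne_itemL : itemB p ≠ itemL p :=
  Fin.ne_of_val_ne (by simp only [itemB_val, itemL_val]; omega)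

theorem sum_profile (r₀ : Fin (2 * p + 4) → ℕ) (F : (Fin (2 * p + 4) → ℕ) → ℝ) :
    ∑ i, F (profile p r₀ i) =
      F r₀ + F (rankAB p) + (2 * p + 2) * F Fin.val := by
  rw [Fin.sum_univ_succ, Fin.sum_univ_succ]
  simp only [profile, Fin.cons_zero, Fin.succ_zero_eq_one, Fin.cons_one, Fin.cons_succ, sum_const,
    card_univ, Fintype.card_fin, nsmul_eq_mul, Nat.cast_add, Nat.cast_mul, Nat.cast_ofNat]
  ring

theorem groupTime_mono (hb₀ : p / (2 * p + 2) ≤ b) (hb₁ : b ≤ 1 / 2) :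
    Monotone (groupTime p b) := by
  refine monotone_nat_of_le_succ fun k => ?_
  have hg : (0 : ℝ) < 2 * p + 2 := by positivity
  unfold groupTime
  rw [div_le_iff₀ hg] at hb₀
  split_ifs <;> push_cast <;> rify at * <;> (try field_simp) <;> nlinarith

theorem groupTime_le_one (hb₀ : p / (2 * p + 2) ≤ b) (hb₁ : b ≤ 1 / 2) (k : ℕ) :
    groupTime p b k ≤ 1 :=
  (groupTime_mono hb₀ hb₁ (k.le_add_right (2 * p + 3))).trans_eq
    (by rw [groupTime, if_neg (by omega), if_neg (by omega)])

theorem groupTime_succ_sub {k : ℕ} (hk : k ≤ 2 * p + 1) (hkB : k ≠ p) :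
    groupTime p b (k + 1) - groupTime p b k = 1 / (2 * p + 2) := by
  have hg : (2 * p + 2 : ℝ) ≠ 0 := by positivity
  unfold groupTime
  split_ifs <;> first | omega | (push_cast; field_simp; ring)

theorem groupTime_self : groupTime p b p = p / (2 * p + 2) := by
  rw [groupTime, if_pos le_rfl]

theorem groupTime_succ_self : groupTime p b (p + 1) = b := by
  rw [groupTime, if_neg (by omega), if_pos (by omega)]
  push_cast; ring

theorem groupTime_two_mul_add_two : groupTime p b (2 * p + 2) = b + 1 / 2 := by
  have hg : (2 * p + 2 : ℝ) ≠ 0 := by positivity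
  rw [groupTime, if_neg (by omega), if_pos le_rfl]
  push_cast; field_simp; ring

theorem groupTime_two_mul_add_three : groupTime p b (2 * p + 3) = 1 := by
  rw [groupTime, if_neg (by omega), if_neg (by omega)]

theorem exhaustion_itemA : exhaustion p b tA (itemA p) = tA := by
  rw [exhaustion, if_neg (by simp [itemA])]

theorem exhaustion_itemB : exhaustion p b tA (itemB p) = b := by
  rw [exhaustion, if_pos (by simp [itemB]; omega)]
  exact groupTime_succ_self

theorem exhaustion_itemL : exhaustion p b tA (itemL p) = 1 := by
  rw [exhaustion, if_pos (by simp [itemL])]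
  exact groupTime_two_mul_add_three

theorem exhaustion_nonneg (hb₀ : p / (2 * p + 2) ≤ b) (hb₁ : b ≤ 1 / 2) (htA : 0 ≤ tA)
    (j : Fin (2 * p + 4)) : 0 ≤ exhaustion p b tA j := by
  unfold exhaustion
  split_ifs
  · exact (show groupTime p b 0 = 0 by simp [groupTime]) ▸
      groupTime_mono hb₀ hb₁ (Nat.zero_le _)
  · exact htA

theorem exhaustion_le_itemL (hb₀ : p / (2 * p + 2) ≤ b) (hb₁ : b ≤ 1 / 2) (htA : tA ≤ 1)
    (j : Fin (2 * p + 4)) : exhaustion p b tA j ≤ exhaustion p b tA (itemL p) := by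
  rw [exhaustion_itemL]
  unfold exhaustion
  split_ifs
  · exact groupTime_le_one hb₀ hb₁ _
  · exact htA

theorem share_group (hb₀ : p / (2 * p + 2) ≤ b) (hb₁ : b ≤ 1 / 2) (htA : tA ≤ 1)
    (j : Fin (2 * p + 4)) :
    max (exhaustion p b tA j - startTime Fin.val (exhaustion p b tA) j) 0 =
      if j = itemA p then 0 else groupTime p b (j + 1) - groupTime p b j := by
  split_ifs with hjA
  · subst hjA
    exact max_sub_startTime_eq_zero (j' := itemL p) (by simp [itemL, itemA])
      (exhaustion_le_itemL hb₀ hb₁ htA _)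
  · have hj : j.val ≤ 2 * p + 2 := by
      have := j.isLt
      have : j.val ≠ 2 * p + 3 := fun h => hjA (Fin.ext h)
      omega
    have hchain : ∀ j' : Fin (2 * p + 4), j'.val < 2 * p + 2 →
        exhaustion p b tA j' = groupTime p b (j' + 1) := fun j' hj' => if_pos hj'.le
    rw [startTime_val_eq (groupTime_mono hb₀ hb₁) (by simp [groupTime]) hchain j hj,
      exhaustion, if_pos hj]
    exact max_eq_left (sub_nonneg.2 (groupTime_mono hb₀ hb₁ j.val.le_succ))

/-- The second summand is what the rival and the group eat of `j`. -/
theorem sum_shares_profile (hb₀ : p / (2 * p + 2) ≤ b) (hb₁ : b ≤ 1 / 2) (hbtA : b ≤ tA)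
    (htA : tA ≤ 1) (r₀ : Fin (2 * p + 4) → ℕ) (j : Fin (2 * p + 4)) :
    ∑ i, max (exhaustion p b tA j - startTime (profile p r₀ i) (exhaustion p b tA) j) 0 =
      max (exhaustion p b tA j - startTime r₀ (exhaustion p b tA) j) 0 +
        if j = itemA p then tA else if j = itemB p then (2 * p + 2) * b - p
        else if j = itemL p then 1 - tA + (2 * p + 2) * (1 / 2 - b) else 1 := by
  have hg : (2 * p + 2 : ℝ) ≠ 0 := by positivity
  have hτ0 := exhaustion_nonneg hb₀ hb₁ (hbtA.trans' (hb₀.trans' (by positivity)))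
  have hτL := exhaustion_le_itemL hb₀ hb₁ htA
  refine (sum_profile _ fun r =>
    max (exhaustion p b tA j - startTime r (exhaustion p b tA) j) 0).trans ?_
  rw [add_assoc,
    max_sub_startTime_topThreeRank itemA_ne_itemB itemA_ne_itemL itemB_ne_itemL hτ0 hτL,
    share_group hb₀ hb₁ htA, exhaustion_itemL, exhaustion_itemA, exhaustion_itemB]
  congr 1
  split_ifs with hjA hjB hjL
  · simp
  · rw [hjB, itemB_val, groupTime_self, groupTime_succ_self, max_eq_right (sub_nonpos.2 hbtA)]
    field_simp; ring
  · rw [hjL, itemL_val, groupTime_two_mul_add_two, groupTime_two_mul_add_three, max_eq_left hbtA]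
    ring
  · have hj : j.val ≤ 2 * p + 1 := by
      have := j.isLt
      have hA : j.val ≠ 2 * p + 3 := fun h => hjA (Fin.ext h)
      have hL : j.val ≠ 2 * p + 2 := fun h => hjL (Fin.ext h)
      omega
    rw [groupTime_succ_sub hj fun h => hjB (Fin.ext h)]
    field_simp; ring

theorem sum_shares_truthful (j : Fin (2 * p + 4)) :
    ∑ i, max (exhaustion p (1 / 2) (1 / 2) j -
      startTime (profile p (rankAB p) i) (exhaustion p (1 / 2) (1 / 2)) j) 0 = 1 := by
  have hb₀ : (p : ℝ) / (2 * p + 2) ≤ 1 / 2 := by rw [div_le_iff₀ (by positivity)]; linarith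
  have hτ0 := exhaustion_nonneg hb₀ le_rfl (by norm_num : (0 : ℝ) ≤ 1 / 2)
  have hτL := exhaustion_le_itemL hb₀ le_rfl (by norm_num : (1 / 2 : ℝ) ≤ 1)
  rw [sum_shares_profile hb₀ le_rfl le_rfl (by norm_num),
    max_sub_startTime_topThreeRank itemA_ne_itemB itemA_ne_itemL itemB_ne_itemL hτ0 hτL,
    exhaustion_itemL, exhaustion_itemA, exhaustion_itemB]
  obtain ⟨hjA, hjB, hjL⟩ | rfl | rfl | rfl :
      (j ≠ itemA p ∧ j ≠ itemB p ∧ j ≠ itemL p) ∨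
        j = itemB p ∨ j = itemL p ∨ j = itemA p := by
    tauto
  · simp [hjA, hjB, hjL]
  · simp only [itemA_ne_itemB.symm, ↓reduceIte]
    norm_num
    ring
  · simp only [itemA_ne_itemL.symm, itemB_ne_itemL.symm, ↓reduceIte]
    norm_num
  · simp only [↓reduceIte]
    norm_num

theorem sum_shares_manipulated (hB : (2 * p + 3) * b = p + 1) (hA : 2 * tA = 1 + b)
    (j : Fin (2 * p + 4)) :
    ∑ i, max (exhaustion p b tA j - startTime (profile p (rankBA p) i) (exhaustion p b tA) j) 0
      = 1 := by
  have hb₀ : (p : ℝ) / (2 * p + 2) ≤ b := by rw [div_le_iff₀ (by positivity)]; nlinarith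
  have hb₁ : b ≤ 1 / 2 := by nlinarith
  have hbtA : b ≤ tA := by linarith
  have hτ0 := exhaustion_nonneg hb₀ hb₁ (by nlinarith : 0 ≤ tA)
  have hτL := exhaustion_le_itemL hb₀ hb₁ (by linarith : tA ≤ 1)
  rw [sum_shares_profile hb₀ hb₁ hbtA (by linarith),
    max_sub_startTime_topThreeRank itemA_ne_itemB.symm itemB_ne_itemL itemA_ne_itemL hτ0 hτL,
    exhaustion_itemL, exhaustion_itemA, exhaustion_itemB]
  obtain ⟨hjA, hjB, hjL⟩ | rfl | rfl | rfl :
      (j ≠ itemA p ∧ j ≠ itemB p ∧ j ≠ itemL p) ∨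
        j = itemB p ∨ j = itemL p ∨ j = itemA p := by
    tauto
  · simp [hjA, hjB, hjL]
  · simp only [itemA_ne_itemB.symm, ↓reduceIte]
    linear_combination hB
  · simp only [itemA_ne_itemL.symm, itemB_ne_itemL.symm, ↓reduceIte, max_eq_right hbtA]
    linear_combination -hA - hB
  · simp only [itemA_ne_itemB, ↓reduceIte, max_eq_left (sub_nonneg.2 hbtA)]
    linear_combination hA

theorem profile_injective {r₀ : Fin (2 * p + 4) → ℕ} (h : Function.Injective r₀)
    (i : Fin (2 * p + 4)) :
    Function.Injective (profile p r₀ i) :=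
  Fin.cases h (Fin.cases topThreeRank_injective fun _ => Fin.val_injective) i

theorem profile_of_ne_zero (r₀ r₀' : Fin (2 * p + 4) → ℕ) {i : Fin (2 * p + 4)}
    (hi : i ≠ 0) :
    profile p r₀' i = profile p r₀ i := by
  cases i using Fin.cases with
  | zero => exact absurd rfl hi
  | succ i => rfl

theorem valuation_mem_Icc (j : Fin (2 * p + 4)) : 0 ≤ valuation p j ∧ valuation p j ≤ 1 := by
  have hB : (p : ℝ) / (p + 1) ≤ 1 := div_le_one_of_le₀ (by linarith) (by positivity)
  unfold valuation
  split_ifs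
  · norm_num
  · exact ⟨by positivity, hB⟩
  · norm_num

theorem rankAB_lt_of_valuation_lt {j j' : Fin (2 * p + 4)} (h : valuation p j' < valuation p j) :
    rankAB p j < rankAB p j' := by
  have hB₀ : 0 ≤ (p : ℝ) / (p + 1) := by positivity
  have hB₁ : (p : ℝ) / (p + 1) < 1 := (div_lt_one (by positivity)).2 (by linarith)
  unfold valuation at h
  unfold rankAB topThreeRank
  split_ifs at h ⊢ <;> first | omega | linarith

theorem utility_ofExhaustionTimes {r₀ : Fin (2 * p + 4) → ℕ}
    (hr : ∀ i, Function.Injective (profile p r₀ i)) {τ : Fin (2 * p + 4) → ℝ}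
    (hτ : ∀ j, ∑ i, max (τ j - startTime (profile p r₀ i) τ j) 0 = 1) :
    (ofExhaustionTimes _ hr τ hτ).utility (valuation p) 0 =
      max (τ (itemA p) - startTime r₀ τ (itemA p)) 0 +
        p / (p + 1) * max (τ (itemB p) - startTime r₀ τ (itemB p)) 0 := by
  rw [utility, Fintype.sum_eq_add (itemA p) (itemB p) itemA_ne_itemB, alloc_ofExhaustionTimes,
    alloc_ofExhaustionTimes]
  · simp only [valuation, itemA_ne_itemB.symm, ↓reduceIte, one_mul]
    rfl
  · intro j ⟨hjA, hjB⟩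
    simp [valuation, hjA, hjB]

theorem utility_truthful (hr : ∀ i, Function.Injective (profile p (rankAB p) i)) :
    (ofExhaustionTimes _ hr _ sum_shares_truthful).utility (valuation p) 0 = 1 / 2 := by
  rw [utility_ofExhaustionTimes, startTime_topThreeRank_first,
    startTime_topThreeRank_second itemA_ne_itemB (by rw [exhaustion_itemA]; norm_num),
    exhaustion_itemA, exhaustion_itemB]
  norm_num

theorem utility_manipulated (hr : ∀ i, Function.Injective (profile p (rankBA p) i))
    (hB : (2 * p + 3) * b = p + 1) (hA : 2 * tA = 1 + b) :
    (ofExhaustionTimes _ hr _ (sum_shares_manipulated hB hA)).utility (valuation p) 0 =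
      tA - b + p / (p + 1) * b := by
  have hb : 0 ≤ b := by nlinarith
  have hb₁ : b ≤ 1 := by nlinarith
  rw [utility_ofExhaustionTimes, startTime_topThreeRank_first,
    startTime_topThreeRank_second itemA_ne_itemB.symm (by rwa [exhaustion_itemB]),
    exhaustion_itemA, exhaustion_itemB, sub_zero, max_eq_left hb,
    max_eq_left (by linarith : 0 ≤ tA - b)]

end ThreeHalvesExample

open PSExec ThreeHalvesExample

/-- the bound `3/2` on the incentive ratio of Probabilistic Serial is tight:
for every `ε > 0` there is an instance (with `n = m`) in which some agent's best-response
utility exceeds `3/2 - ε` times its truthful utility. -/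
theorem incentive_ratio_three_halves_tight :
    ∀ ε : ℝ, 0 < ε →
      ∃ (n : ℕ) (rk rk' : Fin n → Fin n → ℕ),
        (∀ i, Function.Injective (rk i)) ∧ (∀ i, Function.Injective (rk' i)) ∧
        ∃ i1 : Fin n,
          (∀ i, i ≠ i1 → rk' i = rk i) ∧
          ∃ a : Fin n → ℝ,
            (∀ j, 0 ≤ a j ∧ a j ≤ 1) ∧
            (∀ j j' : Fin n, a j' < a j → rk i1 j < rk i1 j') ∧
            ∃ (E : PSExec n n rk (fun _ _ => True))
              (E' : PSExec n n rk' (fun _ _ => True)),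
              E'.utility a i1 / E.utility a i1 > 3 / 2 - ε := by
  intro ε hε
  obtain ⟨p, hp⟩ := exists_nat_gt (2 / ε)
  have hB : (2 * p + 3) * ((p + 1) / (2 * p + 3)) = (p + 1 : ℝ) := by field_simp
  have hA : 2 * ((1 + (p + 1) / (2 * p + 3)) / 2) = 1 + (p + 1) / (2 * p + 3 : ℝ) := by ring
  have hAB := profile_injective (p := p) (r₀ := rankAB p) topThreeRank_injective
  have hBA := profile_injective (p := p) (r₀ := rankBA p) topThreeRank_injective
  refine ⟨2 * p + 4, profile p (rankAB p), profile p (rankBA p), hAB, hBA, 0,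
    fun i hi => profile_of_ne_zero _ _ hi, valuation p, valuation_mem_Icc,
    fun j j' => rankAB_lt_of_valuation_lt, ofExhaustionTimes _ hAB _ sum_shares_truthful,
    ofExhaustionTimes _ hBA _ (sum_shares_manipulated hB hA), ?_⟩
  rw [utility_manipulated hBA hB hA, utility_truthful]
  rw [div_lt_iff₀ hε] at hp
  have hp₀ : (0 : ℝ) < 2 * p + 3 := by positivity
  rw [gt_iff_lt, lt_div_iff₀ (by norm_num)]
  field_simp
  nlinarith
end

section
/- The Probabilistic Serial mechanism is not incentive-compatible. Concretely, with 3 agents and 3 items a, b, c: if agent 1 reports b ≻ a ≻ c, agent 2 reports a ≻ b ≻ c, and agent 3 reports a ≻ c ≻ b, then agent 1's allocation of (a, b, c) is (0, 3/4, 1/4); if instead agent 1 reports a ≻ b ≻ c (agents 2 and 3 unchanged), agent 1's allocation becomes (1/3, 1/2, 1/6). Hence, for agent 1's cardinal utilities a_{1a} = 0.9, a_{1b} = 1, a_{1c} = 0 (compatible with the true order b ≻ a ≻ c), its utility increases from 0.75 under the truthful report to 0.8 under the misreport. -/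
open MeasureTheory

/-! Between two consecutive exhaustion times the set of items with positive supply does not
change, so every agent keeps eating the same item and the supplies decrease linearly at rates
given by the numbers of agents eating them. This is proved by continuous induction, using that
the supplies are `n`-Lipschitz in time. Running the process phase by phase, with exhaustion
times `1/2, 3/4, 1` for the truthful profile and `1/3, 5/6, 1` for the misreport, gives the
allocations of agent 1 (index `0`), and the utilities follow. -/

namespace PSExec

open Set Filter Topology

variable {n m : ℕ} {rk : Fin n → Fin m → ℕ} {active : Fin n → ℝ → Prop}

def numEaters (J : Fin n → Fin m) (j : Fin m) : ℕ :=
  (Finset.univ.filter fun i => J i = j).card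

noncomputable def eaten (E : PSExec n m rk active) (i : Fin n) (j : Fin m) (t₀ t : ℝ) : ℝ :=
  (volume {s : ℝ | t₀ < s ∧ s ≤ t ∧ E.eats i s = some j}).toReal

section General

variable (E : PSExec n m rk active) (i : Fin n) (j : Fin m)

lemma setOf_eats_Ioc_eq (t₀ t : ℝ) :
    {s : ℝ | t₀ < s ∧ s ≤ t ∧ E.eats i s = some j} = Ioc t₀ t ∩ {s | E.eats i s = some j} := by
  ext s
  simp [and_assoc]

lemma eaten_add {t₀ t₁ t₂ : ℝ} (h₀₁ : t₀ ≤ t₁) (h₁₂ : t₁ ≤ t₂) :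
    E.eaten i j t₀ t₂ = E.eaten i j t₀ t₁ + E.eaten i j t₁ t₂ := by
  simp only [eaten, setOf_eats_Ioc_eq]
  rw [← Ioc_union_Ioc_eq_Ioc h₀₁ h₁₂, union_inter_distrib_right,
    measure_union ((Ioc_disjoint_Ioc_of_le le_rfl).mono inter_subset_left inter_subset_left)
      (measurableSet_Ioc.inter (E.meas i j)),
    ENNReal.toReal_add (measure_inter_lt_top_of_left_ne_top (by simp)).ne
      (measure_inter_lt_top_of_left_ne_top (by simp)).ne]

lemma eaten_le {t₀ t : ℝ} (h : t₀ ≤ t) : E.eaten i j t₀ t ≤ t - t₀ := by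
  rw [eaten, setOf_eats_Ioc_eq, ← ENNReal.toReal_ofReal (sub_nonneg.2 h), ← Real.volume_Ioc]
  exact ENNReal.toReal_mono (by simp) (measure_mono inter_subset_left)

lemma eaten_eq_of_eats_Ioo {t₀ t : ℝ} (h : t₀ ≤ t) (j' : Fin m)
    (heats : ∀ s ∈ Ioo t₀ t, E.eats i s = some j') :
    E.eaten i j t₀ t = if j' = j then t - t₀ else 0 := by
  split_ifs with hj
  · subst hj
    refine le_antisymm (E.eaten_le i j' h) ?_
    rw [eaten, setOf_eats_Ioc_eq, ← ENNReal.toReal_ofReal (sub_nonneg.2 h), ← Real.volume_Ioo]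
    refine ENNReal.toReal_mono (measure_inter_lt_top_of_left_ne_top (by simp)).ne
      (measure_mono fun s hs => ⟨Ioo_subset_Ioc_self hs, heats s hs⟩)
  · have hsub : {s : ℝ | t₀ < s ∧ s ≤ t ∧ E.eats i s = some j} ⊆ {t} := by
      rintro s ⟨hs₀, hs, hsj⟩
      refine hs.eq_or_lt.resolve_right fun hst => hj ?_
      exact Option.some.inj ((heats s ⟨hs₀, hst⟩).symm.trans hsj)
    rw [eaten, measure_mono_null hsub (measure_singleton t), ENNReal.toReal_zero]

lemma rem_eq_sub_eaten {t₀ t : ℝ} (h₀ : 0 ≤ t₀) (h : t₀ ≤ t) :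
    E.rem j t = E.rem j t₀ - ∑ i, E.eaten i j t₀ t := by
  have hrem : ∀ t, 0 ≤ t → E.rem j t = 1 - ∑ i, E.eaten i j 0 t := E.rem_def j
  rw [hrem t (h₀.trans h), hrem t₀ h₀]
  simp only [fun i => E.eaten_add i j h₀ h, Finset.sum_add_distrib]
  ring

lemma rem_zero : E.rem j 0 = 1 := by
  simp [E.rem_def j 0 le_rfl, setOf_eats_Ioc_eq]

lemma rem_eq_of_eats_Ioo {t₀ t : ℝ} (h₀ : 0 ≤ t₀) (h : t₀ ≤ t) (J : Fin n → Fin m)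
    (heats : ∀ s ∈ Ioo t₀ t, ∀ i, E.eats i s = some (J i)) :
    E.rem j t = E.rem j t₀ - numEaters J j * (t - t₀) := by
  rw [E.rem_eq_sub_eaten j h₀ h]
  simp only [fun i => E.eaten_eq_of_eats_Ioo i j h (J i) fun s hs => heats s hs i,
    Finset.sum_ite, Finset.sum_const_zero, add_zero, Finset.sum_const, nsmul_eq_mul, numEaters]

lemma rem_le_rem_of_le {t₀ t : ℝ} (h₀ : 0 ≤ t₀) (h : t₀ ≤ t) : E.rem j t ≤ E.rem j t₀ := by
  rw [E.rem_eq_sub_eaten j h₀ h, sub_le_self_iff]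
  exact Finset.sum_nonneg fun i _ => ENNReal.toReal_nonneg

lemma rem_le_rem_add_mul {t₀ t : ℝ} (h₀ : 0 ≤ t₀) (h : t₀ ≤ t) :
    E.rem j t₀ ≤ E.rem j t + n * (t - t₀) := by
  have : ∑ i, E.eaten i j t₀ t ≤ n * (t - t₀) := by
    refine (Finset.sum_le_sum fun i _ => E.eaten_le i j h).trans_eq ?_
    simp [mul_sub]
  linarith [E.rem_eq_sub_eaten j h₀ h]

lemma lipschitzOnWith_rem : LipschitzOnWith n (E.rem j) (Ici 0) := by
  refine LipschitzOnWith.of_le_add_mul _ fun s hs t ht => ?_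
  rw [NNReal.coe_natCast, Real.dist_eq]
  rcases le_total s t with hst | hts
  · rw [abs_sub_comm]
    linarith [E.rem_le_rem_add_mul j hs hst,
      mul_le_mul_of_nonneg_left (le_abs_self (t - s)) (Nat.cast_nonneg (α := ℝ) n)]
  · linarith [E.rem_le_rem_of_le j ht hts, mul_nonneg (Nat.cast_nonneg n) (abs_nonneg (s - t))]

lemma continuousOn_rem : ContinuousOn (E.rem j) (Ici 0) :=
  (E.lipschitzOnWith_rem j).continuousOn

lemma alloc_eq_of_eats_iff {a b : ℝ} (ha : 0 ≤ a) (hab : a ≤ b)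
    (h : ∀ s, 0 < s → (E.eats i s = some j ↔ s ∈ Ico a b)) : E.alloc i j = b - a := by
  have hsub : Ioo a b ⊆ {s | 0 < s ∧ E.eats i s = some j} := fun s hs =>
    ⟨ha.trans_lt hs.1, (h s (ha.trans_lt hs.1)).2 (Ioo_subset_Ico_self hs)⟩
  have hsup : {s | 0 < s ∧ E.eats i s = some j} ⊆ Ico a b := fun s hs => (h s hs.1).1 hs.2
  have hvol := le_antisymm (measure_mono hsup)
    (Real.volume_Ico ▸ Real.volume_Ioo ▸ measure_mono hsub)
  rw [alloc, hvol, Real.volume_Ico, ENNReal.toReal_ofReal (sub_nonneg.2 hab)]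

end General

section AllActive

variable (E : PSExec n m rk fun _ _ => True)

lemma eats_eq_of_rem_pos_iff {s t : ℝ} (hs : 0 ≤ s) (ht : 0 ≤ t)
    (hpos : ∀ j, 0 < E.rem j s ↔ 0 < E.rem j t) (i : Fin n) : E.eats i s = E.eats i t := by
  ext j
  simp only [E.eats_iff i s hs trivial, E.eats_iff i t ht trivial, hpos]

lemma eats_eq_none_of_rem_nonpos {t s : ℝ} (ht : 0 ≤ t) (hts : t ≤ s)
    (hrem : ∀ j, E.rem j t ≤ 0) (i : Fin n) : E.eats i s = none := by
  refine Option.eq_none_iff_forall_ne_some.2 fun j hj => ?_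
  have hpos := ((E.eats_iff i s (ht.trans hts) trivial j).1 hj).1
  linarith [E.rem_le_rem_of_le j ht hts, hrem j]

end AllActive

structure IsPhase (E : PSExec n m rk fun _ _ => True) (t₀ t₁ : ℝ) (J : Fin n → Fin m) :
    Prop where
  nonneg : 0 ≤ t₀
  eats_start : ∀ i, E.eats i t₀ = some (J i)
  supply : ∀ j, 0 < E.rem j t₀ → numEaters J j * (t₁ - t₀) ≤ E.rem j t₀

namespace IsPhase

variable {E : PSExec n m rk fun _ _ => True} {t₀ t₁ : ℝ} {J : Fin n → Fin m}

lemma rem_pos_iff (hP : E.IsPhase t₀ t₁ J) {t : ℝ} (ht : t ∈ Ico t₀ t₁) {j : Fin m}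
    (hrem : E.rem j t = E.rem j t₀ - numEaters J j * (t - t₀)) :
    0 < E.rem j t ↔ 0 < E.rem j t₀ := by
  refine ⟨fun h => lt_of_lt_of_le h (E.rem_le_rem_of_le j hP.nonneg ht.1), fun h => ?_⟩
  have hsupply := hP.supply j h
  have hk : (0 : ℝ) ≤ numEaters J j := Nat.cast_nonneg _
  rw [hrem]
  nlinarith [ht.1, ht.2]

lemma rem_eq (hP : E.IsPhase t₀ t₁ J) :
    ∀ t ∈ Icc t₀ t₁, ∀ j, E.rem j t = E.rem j t₀ - numEaters J j * (t - t₀) := by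
  let S := {t | ∀ j, E.rem j t = E.rem j t₀ - numEaters J j * (t - t₀)}
  have hcont : ContinuousOn (fun t j => E.rem j t - (E.rem j t₀ - numEaters J j * (t - t₀)))
      (Icc t₀ t₁) := by
    refine continuousOn_pi.2 fun j => ((E.continuousOn_rem j).mono ?_).sub (by fun_prop)
    exact fun t ht => hP.nonneg.trans ht.1
  have hclosed : IsClosed (S ∩ Icc t₀ t₁) := by
    convert hcont.preimage_isClosed_of_isClosed isClosed_Icc isClosed_singleton (t := {0})
      using 1
    ext t
    simp [S, funext_iff, sub_eq_zero, and_comm]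
  -- The supplies positive at `x` stay positive just after `x`, so nobody changes item there.
  refine hclosed.Icc_subset_of_forall_mem_nhdsWithin (fun j => by simp) ?_
  rintro x ⟨hxS, hx⟩
  have hx₀ : 0 ≤ x := hP.nonneg.trans hx.1
  have hnear : ∀ᶠ y in 𝓝[>] x, ∀ j, 0 < E.rem j t₀ → 0 < E.rem j y := by
    refine eventually_all.2 fun j => ?_
    by_cases hj : 0 < E.rem j t₀
    · have hcontj := ((E.continuousOn_rem j).continuousWithinAt hx₀).mono
        fun y (hy : x < y) => hx₀.trans hy.le
      exact (hcontj.eventually_const_lt ((hP.rem_pos_iff hx (hxS j)).2 hj)).mono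
        fun y hy _ => hy
    · exact Eventually.of_forall fun y h => absurd h hj
  obtain ⟨u, hxu, hu⟩ := mem_nhdsGT_iff_exists_Ioo_subset.1 hnear
  have heats : ∀ y ∈ Ioo x u, ∀ i, E.eats i y = some (J i) := fun y hy i => by
    rw [← hP.eats_start i]
    refine E.eats_eq_of_rem_pos_iff (hx₀.trans hy.1.le) hP.nonneg
      (fun j => ⟨fun h => ?_, hu hy j⟩) i
    by_contra hj
    linarith [E.rem_le_rem_of_le j hP.nonneg (hx.1.trans hy.1.le)]
  filter_upwards [Ioo_mem_nhdsGT hxu] with y hy j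
  rw [E.rem_eq_of_eats_Ioo j hx₀ hy.1.le J fun s hs => heats s ⟨hs.1, hs.2.trans hy.2⟩, hxS j]
  ring

lemma eats_eq (hP : E.IsPhase t₀ t₁ J) : ∀ t ∈ Ico t₀ t₁, ∀ i, E.eats i t = some (J i) :=
  fun t ht i => hP.eats_start i ▸ E.eats_eq_of_rem_pos_iff (hP.nonneg.trans ht.1) hP.nonneg
    (fun j => hP.rem_pos_iff ht (hP.rem_eq t (Ico_subset_Icc_self ht) j)) i

lemma of_rem_eq (v : Fin m → ℝ) (h₀ : 0 ≤ t₀) (hv : ∀ j, E.rem j t₀ = v j)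
    (hJ : ∀ i, 0 < v (J i) ∧ ∀ j, 0 < v j → rk i (J i) ≤ rk i j)
    (hsupply : ∀ j, 0 < v j → numEaters J j * (t₁ - t₀) ≤ v j) : E.IsPhase t₀ t₁ J where
  nonneg := h₀
  eats_start i := (E.eats_iff i t₀ h₀ trivial _).2 (by simpa only [hv] using hJ i)
  supply j := by simpa only [hv] using hsupply j

lemma eats_eq_ite (hP : E.IsPhase t₀ t₁ J) {i : Fin n} {f : ℝ → Option (Fin m)}
    (hf : ∀ s, t₁ ≤ s → E.eats i s = f s) :
    ∀ s, t₀ ≤ s → E.eats i s = if s < t₁ then some (J i) else f s := fun s hs => by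
  split_ifs with h
  exacts [hP.eats_eq s ⟨hs, h⟩ i, hf s (not_lt.1 h)]

end IsPhase

end PSExec

open PSExec

lemma truthful_eats_zero
    (E : PSExec 3 3 ![![1, 0, 2], ![0, 1, 2], ![0, 2, 1]] fun _ _ => True) :
    ∀ s, 0 ≤ s → E.eats 0 s =
      if s < 1 / 2 then some 1 else if s < 3 / 4 then some 1
      else if s < 1 then some 2 else none := by
  have r₀ : ∀ j, E.rem j 0 = ![1, 1, 1] j := fun j => by fin_cases j <;> simp [E.rem_zero]
  have k₁ : numEaters ![(1 : Fin 3), 0, 0] = ![2, 1, 0] := funext (by decide)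
  have p₁ : E.IsPhase 0 (1 / 2) ![1, 0, 0] := .of_rem_eq _ le_rfl r₀
    (by simp [Fin.forall_fin_succ]) (by norm_num [k₁, Fin.forall_fin_succ])
  have r₁ : ∀ j, E.rem j (1 / 2) = ![0, 1 / 2, 1] j := fun j => by
    rw [p₁.rem_eq _ ⟨by norm_num, le_rfl⟩, r₀, k₁]; fin_cases j <;> norm_num
  have k₂ : numEaters ![(1 : Fin 3), 1, 2] = ![0, 2, 1] := funext (by decide)
  have p₂ : E.IsPhase (1 / 2) (3 / 4) ![1, 1, 2] := .of_rem_eq _ (by norm_num) r₁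
    (by simp [Fin.forall_fin_succ]) (by norm_num [k₂, Fin.forall_fin_succ])
  have r₂ : ∀ j, E.rem j (3 / 4) = ![0, 0, 3 / 4] j := fun j => by
    rw [p₂.rem_eq _ ⟨by norm_num, by norm_num⟩, r₁, k₂]; fin_cases j <;> norm_num
  have k₃ : numEaters ![(2 : Fin 3), 2, 2] = ![0, 0, 3] := funext (by decide)
  have p₃ : E.IsPhase (3 / 4) 1 ![2, 2, 2] := .of_rem_eq _ (by norm_num) r₂
    (by simp [Fin.forall_fin_succ]) (by norm_num [k₃, Fin.forall_fin_succ])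
  have r₃ : ∀ j, E.rem j 1 ≤ 0 := fun j => by
    rw [p₃.rem_eq _ ⟨by norm_num, le_rfl⟩, r₂, k₃]; fin_cases j <;> norm_num
  exact p₁.eats_eq_ite fun s h₁ => p₂.eats_eq_ite (fun s h₂ => p₃.eats_eq_ite
    (fun s h₃ => E.eats_eq_none_of_rem_nonpos zero_le_one h₃ r₃ 0) s h₂) s h₁

lemma truthful_alloc_zero
    (E : PSExec 3 3 ![![1, 0, 2], ![0, 1, 2], ![0, 2, 1]] fun _ _ => True) :
    E.alloc 0 0 = 0 ∧ E.alloc 0 1 = 3 / 4 ∧ E.alloc 0 2 = 1 / 4 := by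
  have heats := truthful_eats_zero E
  refine ⟨?_, ?_, ?_⟩
  · simpa using E.alloc_eq_of_eats_iff 0 0 (a := 0) (b := 0) le_rfl le_rfl fun s hs => by
      rw [heats s hs.le]; grind
  · simpa using E.alloc_eq_of_eats_iff 0 1 (a := 0) (b := 3 / 4) le_rfl (by norm_num)
      fun s hs => by rw [heats s hs.le]; grind
  · convert E.alloc_eq_of_eats_iff 0 2 (a := 3 / 4) (b := 1) (by norm_num) (by norm_num)
      fun s hs => by rw [heats s hs.le]; grind
    norm_num

lemma misreport_eats_zero
    (E : PSExec 3 3 ![![0, 1, 2], ![0, 1, 2], ![0, 2, 1]] fun _ _ => True) :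
    ∀ s, 0 ≤ s → E.eats 0 s =
      if s < 1 / 3 then some 0 else if s < 5 / 6 then some 1
      else if s < 1 then some 2 else none := by
  have r₀ : ∀ j, E.rem j 0 = ![1, 1, 1] j := fun j => by fin_cases j <;> simp [E.rem_zero]
  have k₁ : numEaters ![(0 : Fin 3), 0, 0] = ![3, 0, 0] := funext (by decide)
  have p₁ : E.IsPhase 0 (1 / 3) ![0, 0, 0] := .of_rem_eq _ le_rfl r₀
    (by simp [Fin.forall_fin_succ]) (by simp [k₁, Fin.forall_fin_succ])
  have r₁ : ∀ j, E.rem j (1 / 3) = ![0, 1, 1] j := fun j => by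
    rw [p₁.rem_eq _ ⟨by norm_num, le_rfl⟩, r₀, k₁]; fin_cases j <;> norm_num
  have k₂ : numEaters ![(1 : Fin 3), 1, 2] = ![0, 2, 1] := funext (by decide)
  have p₂ : E.IsPhase (1 / 3) (5 / 6) ![1, 1, 2] := .of_rem_eq _ (by norm_num) r₁
    (by simp [Fin.forall_fin_succ]) (by norm_num [k₂, Fin.forall_fin_succ])
  have r₂ : ∀ j, E.rem j (5 / 6) = ![0, 0, 1 / 2] j := fun j => by
    rw [p₂.rem_eq _ ⟨by norm_num, by norm_num⟩, r₁, k₂]; fin_cases j <;> norm_num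
  have k₃ : numEaters ![(2 : Fin 3), 2, 2] = ![0, 0, 3] := funext (by decide)
  have p₃ : E.IsPhase (5 / 6) 1 ![2, 2, 2] := .of_rem_eq _ (by norm_num) r₂
    (by simp [Fin.forall_fin_succ]) (by norm_num [k₃, Fin.forall_fin_succ])
  have r₃ : ∀ j, E.rem j 1 ≤ 0 := fun j => by
    rw [p₃.rem_eq _ ⟨by norm_num, le_rfl⟩, r₂, k₃]; fin_cases j <;> norm_num
  exact p₁.eats_eq_ite fun s h₁ => p₂.eats_eq_ite (fun s h₂ => p₃.eats_eq_ite
    (fun s h₃ => E.eats_eq_none_of_rem_nonpos zero_le_one h₃ r₃ 0) s h₂) s h₁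

lemma misreport_alloc_zero
    (E : PSExec 3 3 ![![0, 1, 2], ![0, 1, 2], ![0, 2, 1]] fun _ _ => True) :
    E.alloc 0 0 = 1 / 3 ∧ E.alloc 0 1 = 1 / 2 ∧ E.alloc 0 2 = 1 / 6 := by
  have heats := misreport_eats_zero E
  refine ⟨?_, ?_, ?_⟩
  · simpa using E.alloc_eq_of_eats_iff 0 0 (a := 0) (b := 1 / 3) le_rfl (by norm_num)
      fun s hs => by rw [heats s hs.le]; grind
  · convert E.alloc_eq_of_eats_iff 0 1 (a := 1 / 3) (b := 5 / 6) (by norm_num) (by norm_num)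
      fun s hs => by rw [heats s hs.le]; grind
    norm_num
  · convert E.alloc_eq_of_eats_iff 0 2 (a := 5 / 6) (b := 1) (by norm_num) (by norm_num)
      fun s hs => by rw [heats s hs.le]; grind
    norm_num

/-- Probabilistic Serial is not incentive-compatible.  With three agents and
three items `a, b, c` (indices `0, 1, 2`), truthful reports `b ≻ a ≻ c`, `a ≻ b ≻ c`,
`a ≻ c ≻ b` give agent 1 the allocation `(0, 3/4, 1/4)`; if agent 1 misreports `a ≻ b ≻ c`
its allocation becomes `(1/3, 1/2, 1/6)`, and with utilities `(0.9, 1, 0)` its utility rises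
from `0.75` to `0.8`. -/
theorem ps_not_incentive_compatible
    (rk rk' : Fin 3 → Fin 3 → ℕ)
    (hrk : rk = ![![1, 0, 2], ![0, 1, 2], ![0, 2, 1]])
    (hrk' : rk' = ![![0, 1, 2], ![0, 1, 2], ![0, 2, 1]])
    (E : PSExec 3 3 rk (fun _ _ => True))
    (E' : PSExec 3 3 rk' (fun _ _ => True)) :
    E.alloc 0 0 = 0 ∧ E.alloc 0 1 = 3 / 4 ∧ E.alloc 0 2 = 1 / 4 ∧
    E'.alloc 0 0 = 1 / 3 ∧ E'.alloc 0 1 = 1 / 2 ∧ E'.alloc 0 2 = 1 / 6 ∧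
    E.utility ![0.9, 1, 0] 0 = 0.75 ∧ E'.utility ![0.9, 1, 0] 0 = 0.8 := by
  subst hrk hrk'
  obtain ⟨a₀, a₁, a₂⟩ := truthful_alloc_zero E
  obtain ⟨b₀, b₁, b₂⟩ := misreport_alloc_zero E'
  refine ⟨a₀, a₁, a₂, b₀, b₁, b₂, ?_, ?_⟩ <;>
    norm_num [utility, Fin.sum_univ_three, Matrix.cons_val_two, a₀, a₁, a₂, b₀, b₁, b₂]
end
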